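/- arXiv:0712.2929 — 3 statements merged into one kernel-verified Lean document; each statement's English description precedes it below -/
import Mathlib

section
/- Let η, γ, ξ ∈ {0,1}^ℤ with η ≤ γ ≤ ξ pointwise. For m ≤ n and l ≥ 1, let g^l_{m,n} be the number of interior maximal constant blocks of length exactly l in the sequence (γ(x_1),...,γ(x_k)), where x_1 < ... < x_k are the sites in [m,n] with η=0 and ξ=1 (a block is interior if it has a differing γ-value on both sides within the sequence). Then g^l_{m,n} ≤ g^l_{m-1,n} and g^l_{m,n} ≤ g^l_{m,n+1}. -/
open Classical Finset

/-- Sites `x ∈ [m,n]` where `η x = 0` and `ξ x = 1`. -/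
noncomputable def sites (η ξ : ℤ → Bool) (m n : ℤ) : Finset ℤ :=
  (Finset.Icc m n).filter (fun x => η x = false ∧ ξ x = true)

/-- The values of `γ` along the increasingly ordered sites of `[m,n]` where `η = 0`, `ξ = 1`. -/
noncomputable def gammaSeq (η γ ξ : ℤ → Bool) (m n : ℤ) : List Bool :=
  ((sites η ξ m n).sort (· ≤ ·)).map γ

/-- Number of adjacent sign changes in a list. -/
def changes : List Bool → ℕ
  | a :: b :: l => (if a ≠ b then 1 else 0) + changes (b :: l)
  | _ => 0

/-- Number of maximal constant blocks of a list. -/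
def blocks : List Bool → ℕ
  | [] => 0
  | a :: l => 1 + changes (a :: l)

/-- `f_{m,n}(η,γ,ξ)`: number of maximal constant blocks of `γ` along the
sites in `[m,n]` where `η = 0` and `ξ = 1`. -/
noncomputable def fCount (η γ ξ : ℤ → Bool) (m n : ℤ) : ℕ :=
  blocks (gammaSeq η γ ξ m n)

/-- Number of interior maximal constant blocks of length exactly `l` of a list `s`
(0-indexed: a block starting at index `i ≥ 1` with `i + l + 1 ≤ s.length`). -/
noncomputable def interiorBlocks (s : List Bool) (l : ℕ) : ℕ :=
  ((Finset.range s.length).filter (fun i =>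
    1 ≤ i ∧ i + l + 1 ≤ s.length ∧
    s.getD (i - 1) false ≠ s.getD i false ∧
    (∀ j, i ≤ j → j < i + l → s.getD j false = s.getD i false) ∧
    s.getD (i + l) false ≠ s.getD i false)).card

/-- `g^l_{m,n}(η,γ,ξ)`: number of interior maximal constant blocks of length `l` of `γ`
along the sites in `[m,n]` where `η = 0` and `ξ = 1`. -/
noncomputable def gCount (η γ ξ : ℤ → Bool) (m n : ℤ) (l : ℕ) : ℕ :=
  interiorBlocks (gammaSeq η γ ξ m n) l

/-!
Enlarging `[m,n]` by one site either leaves the list of sites unchanged or adds a site at one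
end, so the old `γ`-sequence is a contiguous piece of the new one; an interior block of a list
stays an interior block of the same length in every list containing it contiguously.
-/

theorem interiorBlocks_le_append_left (s t : List Bool) (l : ℕ) :
    interiorBlocks s l ≤ interiorBlocks (t ++ s) l := by
  unfold interiorBlocks
  refine card_le_card_of_injOn (· + t.length) (fun i hi => ?_) fun _ _ _ _ h => by simpa using h
  have shift (j : ℕ) : (t ++ s).getD (j + t.length) false = s.getD j false := by
    rw [List.getD_append_right _ _ _ _ (by omega), Nat.add_sub_cancel]
  simp only [mem_coe, mem_filter, mem_range, List.length_append] at hi ⊢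
  obtain ⟨hi, hpos, hlen, hprev, hconst, hnext⟩ := hi
  refine ⟨by omega, by omega, by omega, ?_, fun j hj₁ hj₂ => ?_, ?_⟩
  · rwa [show i + t.length - 1 = i - 1 + t.length by omega, shift, shift]
  · obtain ⟨j, rfl⟩ : ∃ j', j = j' + t.length := ⟨j - t.length, by omega⟩
    rw [shift, shift]
    exact hconst j (by omega) (by omega)
  · rwa [show i + t.length + l = i + l + t.length by omega, shift, shift]

theorem interiorBlocks_le_append_right (s t : List Bool) (l : ℕ) :
    interiorBlocks s l ≤ interiorBlocks (s ++ t) l := by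
  unfold interiorBlocks
  refine card_le_card fun i hi => ?_
  simp only [mem_filter, mem_range, List.length_append] at hi ⊢
  obtain ⟨hi, hpos, hlen, hprev, hconst, hnext⟩ := hi
  have keep (j : ℕ) (hj : j ≤ i + l) : (s ++ t).getD j false = s.getD j false :=
    List.getD_append _ _ _ _ (by omega)
  refine ⟨by omega, hpos, by omega, ?_, fun j hj₁ hj₂ => ?_, ?_⟩
  · rwa [keep _ (by omega), keep _ (by omega)]
  · rw [keep _ (by omega), keep _ (by omega)]
    exact hconst j hj₁ hj₂
  · rwa [keep _ le_rfl, keep _ (by omega)]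

theorem List.IsInfix.interiorBlocks_le {s t : List Bool} (h : s <:+: t) (l : ℕ) :
    interiorBlocks s l ≤ interiorBlocks t l := by
  obtain ⟨u, v, rfl⟩ := h
  exact (interiorBlocks_le_append_left s u l).trans (interiorBlocks_le_append_right _ v l)

theorem Finset.sort_insert_of_forall_lt {α : Type*} [LinearOrder α] {s : Finset α} {b : α}
    (h : ∀ a ∈ s, a < b) : (insert b s).sort (· ≤ ·) = s.sort (· ≤ ·) ++ [b] := by
  refine (sortedLT_sort _).eq_of_mem_iff ?_ fun a => by simp [or_comm]
  rw [List.sortedLT_iff_pairwise, List.pairwise_append]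
  exact ⟨List.sortedLT_iff_pairwise.mp (sortedLT_sort s), List.pairwise_singleton _ _,
    by simpa using h⟩

theorem mem_sites {η ξ : ℤ → Bool} {m n x : ℤ} :
    x ∈ sites η ξ m n ↔ (m ≤ x ∧ x ≤ n) ∧ η x = false ∧ ξ x = true := by
  simp [sites]

theorem sort_sites_isSuffix_sub_one (η ξ : ℤ → Bool) (m n : ℤ) :
    (sites η ξ m n).sort (· ≤ ·) <:+ (sites η ξ (m - 1) n).sort (· ≤ ·) := by
  by_cases h : m - 1 ∈ sites η ξ (m - 1) n
  · have hins : sites η ξ (m - 1) n = insert (m - 1) (sites η ξ m n) := by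
      ext x
      simp only [mem_insert, mem_sites] at h ⊢
      grind
    rw [hins, sort_insert _ (fun x hx => by grind [mem_sites]) (by simp [mem_sites])]
    exact List.suffix_cons _ _
  · have hsame : sites η ξ (m - 1) n = sites η ξ m n := by
      ext x
      simp only [mem_sites] at h ⊢
      grind
    rw [hsame]

theorem sort_sites_isPrefix_add_one (η ξ : ℤ → Bool) (m n : ℤ) :
    (sites η ξ m n).sort (· ≤ ·) <+: (sites η ξ m (n + 1)).sort (· ≤ ·) := by
  by_cases h : n + 1 ∈ sites η ξ m (n + 1)
  · have hins : sites η ξ m (n + 1) = insert (n + 1) (sites η ξ m n) := by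
      ext x
      simp only [mem_insert, mem_sites] at h ⊢
      grind
    rw [hins, sort_insert_of_forall_lt fun x hx => by grind [mem_sites]]
    exact List.prefix_append _ _
  · have hsame : sites η ξ m (n + 1) = sites η ξ m n := by
      ext x
      simp only [mem_sites] at h ⊢
      grind
    rw [hsame]

theorem g_monotone_general (η γ ξ : ℤ → Bool)
    (m n : ℤ) (l : ℕ) :
    gCount η γ ξ m n l ≤ gCount η γ ξ (m - 1) n l ∧
      gCount η γ ξ m n l ≤ gCount η γ ξ m (n + 1) l :=
  ⟨((sort_sites_isSuffix_sub_one η ξ m n).map γ).isInfix.interiorBlocks_le l,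
    ((sort_sites_isPrefix_add_one η ξ m n).map γ).isInfix.interiorBlocks_le l⟩

/-- `g^l_{m,n}` is monotone when the interval is enlarged:
`g^l_{m,n} ≤ g^l_{m-1,n}` and `g^l_{m,n} ≤ g^l_{m,n+1}`. -/
theorem g_monotone (η γ ξ : ℤ → Bool)
    (hηγ : ∀ x, η x ≤ γ x) (hγξ : ∀ x, γ x ≤ ξ x)
    (m n : ℤ) (hmn : m ≤ n) (l : ℕ) (hl : 1 ≤ l) :
    gCount η γ ξ m n l ≤ gCount η γ ξ (m - 1) n l ∧
      gCount η γ ξ m n l ≤ gCount η γ ξ m (n + 1) l :=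
  g_monotone_general η γ ξ m n l
end

section
/- Let (F_{m,n})_{m≤n} be nonnegative reals, monotone under enlarging the interval, with lim_{n−m→∞} F_{m,n}/(n−m) = 0, and let (G_{m,n}) be nonnegative reals and constants C > 0, K ≥ 0 with C·G_{m,n} ≤ K·(F_{m-1,n} + F_{m,n+1} − 2F_{m,n}) for all m ≤ n. If additionally G_{m,n} ≤ G_{m-1,n} and G_{m,n} ≤ G_{m,n+1}, then G_{m,n} = 0 for all m ≤ n. -/
/-- Monotonicity under shifts for a function monotone under enlarging the interval. -/
lemma shift_mono (f : ℤ → ℤ → ℝ)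
    (hl : ∀ m n : ℤ, m ≤ n → f m n ≤ f (m - 1) n)
    (hr : ∀ m n : ℤ, m ≤ n → f m n ≤ f m (n + 1))
    (m n : ℤ) (h : m ≤ n) : ∀ i j : ℕ, f m n ≤ f (m - i) (n + j) := by
  have h1 : ∀ i : ℕ, f m n ≤ f (m - i) n := by
    intro i
    induction i with
    | zero => simp
    | succ k ih =>
      have hk : m - (k : ℤ) ≤ n := by omega
      have heq : m - ((k + 1 : ℕ) : ℤ) = m - (k : ℤ) - 1 := by push_cast; ring
      rw [heq]
      exact ih.trans (hl _ _ hk)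
  intro i j
  have h2 : ∀ j : ℕ, f (m - i) n ≤ f (m - i) (n + j) := by
    intro j
    induction j with
    | zero => simp
    | succ k ih =>
      have hk : m - (i : ℤ) ≤ n + (k : ℤ) := by omega
      have heq : n + ((k + 1 : ℕ) : ℤ) = n + (k : ℤ) + 1 := by push_cast; ring
      rw [heq]
      exact ih.trans (hr _ _ hk)
  exact (h1 i).trans (h2 j)



/-- If `F_{m,n} ≥ 0` is monotone under enlarging the interval with
`F_{m,n}/(n-m) → 0` as `n - m → ∞`, and `G_{m,n} ≥ 0` is monotone under enlarging
the interval and satisfies `C·G_{m,n} ≤ K·(F_{m-1,n} + F_{m,n+1} - 2F_{m,n})`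
with `C > 0`, `K ≥ 0`, then `G ≡ 0`. -/
theorem G_eq_zero (F G : ℤ → ℤ → ℝ) (C K : ℝ) (hC : 0 < C) (hK : 0 ≤ K)
    (hF_nonneg : ∀ m n : ℤ, m ≤ n → 0 ≤ F m n)
    (hF_left : ∀ m n : ℤ, m ≤ n → F m n ≤ F (m - 1) n)
    (hF_right : ∀ m n : ℤ, m ≤ n → F m n ≤ F m (n + 1))
    (hF_lim : ∀ ε : ℝ, 0 < ε → ∃ R : ℤ, ∀ m n : ℤ, m ≤ n → R ≤ n - m →
      F m n / ((n : ℝ) - m) < ε)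
    (hG_nonneg : ∀ m n : ℤ, m ≤ n → 0 ≤ G m n)
    (hG_left : ∀ m n : ℤ, m ≤ n → G m n ≤ G (m - 1) n)
    (hG_right : ∀ m n : ℤ, m ≤ n → G m n ≤ G m (n + 1))
    (hCG : ∀ m n : ℤ, m ≤ n → C * G m n ≤ K * (F (m - 1) n + F m (n + 1) - 2 * F m n)) :
    ∀ m n : ℤ, m ≤ n → G m n = 0 := by
  intro m n hmn
  -- Key inequality: for all N, N² · C · G m n ≤ 2 K N F(m-N, n+N)
  have key : ∀ N : ℕ, (N : ℝ) ^ 2 * (C * G m n) ≤ K * (2 * N * F (m - N) (n + N)) := by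
    intro N
    have hFtop : ∀ j : ℕ, j ≤ N → F (m - N) (n + j) ≤ F (m - N) (n + N) := by
      intro j hj
      have h' : m - (N : ℤ) ≤ n + (j : ℤ) := by omega
      have := shift_mono F hF_left hF_right (m - N) (n + j) h' 0 (N - j)
      have heq : n + (j : ℤ) + ((N - j : ℕ) : ℤ) = n + (N : ℤ) := by
        have : ((N - j : ℕ) : ℤ) = (N : ℤ) - j := by omega
        omega
      simpa [heq] using this
    have hFright : ∀ i : ℕ, i ≤ N → F (m - i) (n + N) ≤ F (m - N) (n + N) := by
      intro i hi
      have h' : m - (i : ℤ) ≤ n + (N : ℤ) := by omega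
      have := shift_mono F hF_left hF_right (m - i) (n + N) h' (N - i) 0
      have heq : m - (i : ℤ) - ((N - i : ℕ) : ℤ) = m - (N : ℤ) := by
        have : ((N - i : ℕ) : ℤ) = (N : ℤ) - i := by omega
        omega
      simpa [heq] using this
    -- pointwise bound on the square
    have hbound : ∀ i ∈ Finset.range N, ∀ j ∈ Finset.range N,
        C * G m n ≤ K * ((F (m - i - 1) (n + j) - F (m - i) (n + j))
          + (F (m - i) (n + j + 1) - F (m - i) (n + j))) := by
      intro i hi j hj
      have hij : m - (i : ℤ) ≤ n + (j : ℤ) := by omega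
      have h1 : G m n ≤ G (m - i) (n + j) := shift_mono G hG_left hG_right m n hmn i j
      have h2 := hCG (m - i) (n + j) hij
      calc C * G m n ≤ C * G (m - i) (n + j) := mul_le_mul_of_nonneg_left h1 hC.le
        _ ≤ K * (F (m - i - 1) (n + j) + F (m - i) (n + j + 1) - 2 * F (m - i) (n + j)) := h2
        _ = _ := by ring
    have hsq : (N : ℝ) ^ 2 * (C * G m n)
        = ∑ _i ∈ Finset.range N, ∑ _j ∈ Finset.range N, C * G m n := by
      simp [Finset.sum_const]; ring
    rw [hsq]
    have hstep : ∑ _i ∈ Finset.range N, ∑ _j ∈ Finset.range N, C * G m n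
        ≤ ∑ i ∈ Finset.range N, ∑ j ∈ Finset.range N,
            K * ((F (m - i - 1) (n + j) - F (m - i) (n + j))
              + (F (m - i) (n + j + 1) - F (m - i) (n + j))) :=
      Finset.sum_le_sum fun i hi => Finset.sum_le_sum fun j hj => hbound i hi j hj
    refine hstep.trans ?_
    -- telescoping
    have e1 : ∀ j : ℕ, ∑ i ∈ Finset.range N, (F (m - (i:ℤ) - 1) (n + j) - F (m - i) (n + j))
        = F (m - N) (n + j) - F m (n + j) := by
      intro j
      have ht := Finset.sum_range_sub (f := fun i : ℕ => F (m - i) (n + j)) N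
      have hc : ∀ i : ℕ, F (m - ((i + 1 : ℕ) : ℤ)) (n + j) = F (m - (i:ℤ) - 1) (n + j) := by
        intro i; congr 1; push_cast; ring
      calc ∑ i ∈ Finset.range N, (F (m - (i:ℤ) - 1) (n + j) - F (m - i) (n + j))
          = ∑ i ∈ Finset.range N, (F (m - ((i + 1 : ℕ) : ℤ)) (n + j) - F (m - i) (n + j)) :=
            Finset.sum_congr rfl fun i _ => by rw [hc]
        _ = F (m - N) (n + j) - F (m - ((0:ℕ):ℤ)) (n + j) := ht
        _ = F (m - N) (n + j) - F m (n + j) := by norm_num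
    have e2 : ∀ i : ℕ, ∑ j ∈ Finset.range N, (F (m - i) (n + (j:ℤ) + 1) - F (m - i) (n + j))
        = F (m - i) (n + N) - F (m - i) n := by
      intro i
      have ht := Finset.sum_range_sub (f := fun j : ℕ => F (m - i) (n + j)) N
      have hc : ∀ j : ℕ, F (m - i) (n + ((j + 1 : ℕ) : ℤ)) = F (m - i) (n + (j:ℤ) + 1) := by
        intro j; congr 1; push_cast; ring
      calc ∑ j ∈ Finset.range N, (F (m - i) (n + (j:ℤ) + 1) - F (m - i) (n + j))
          = ∑ j ∈ Finset.range N, (F (m - i) (n + ((j + 1 : ℕ) : ℤ)) - F (m - i) (n + j)) :=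
            Finset.sum_congr rfl fun j _ => by rw [hc]
        _ = F (m - i) (n + N) - F (m - i) (n + ((0:ℕ):ℤ)) := ht
        _ = F (m - i) (n + N) - F (m - i) n := by norm_num
    have hsplit : ∑ i ∈ Finset.range N, ∑ j ∈ Finset.range N,
          K * ((F (m - i - 1) (n + j) - F (m - i) (n + j))
            + (F (m - i) (n + j + 1) - F (m - i) (n + j)))
        = K * ((∑ j ∈ Finset.range N, (F (m - N) (n + j) - F m (n + j)))
            + ∑ i ∈ Finset.range N, (F (m - i) (n + N) - F (m - i) n)) := by
      have : ∑ i ∈ Finset.range N, ∑ j ∈ Finset.range N,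
            K * ((F (m - i - 1) (n + j) - F (m - i) (n + j))
              + (F (m - i) (n + j + 1) - F (m - i) (n + j)))
          = K * ((∑ i ∈ Finset.range N, ∑ j ∈ Finset.range N,
                (F (m - (i:ℤ) - 1) (n + j) - F (m - i) (n + j)))
              + ∑ i ∈ Finset.range N, ∑ j ∈ Finset.range N,
                (F (m - i) (n + (j:ℤ) + 1) - F (m - i) (n + j))) := by
        simp only [Finset.mul_sum, mul_add]
        rw [← Finset.sum_add_distrib]
        refine Finset.sum_congr rfl fun i _ => ?_
        rw [← Finset.sum_add_distrib]
      rw [this, Finset.sum_comm (s := Finset.range N) (t := Finset.range N)]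
      congr 1
      congr 1
      · exact Finset.sum_congr rfl fun j _ => e1 j
      · exact Finset.sum_congr rfl fun i _ => e2 i
    rw [hsplit]
    -- final bound by 2 N F(m-N, n+N)
    have b1 : ∑ j ∈ Finset.range N, (F (m - N) (n + j) - F m (n + j))
        ≤ (N : ℝ) * F (m - N) (n + N) := by
      have : ∀ j ∈ Finset.range N, F (m - N) (n + j) - F m (n + j) ≤ F (m - N) (n + N) := by
        intro j hj
        have hj' := Finset.mem_range.mp hj
        have h0 : 0 ≤ F m (n + j) := hF_nonneg _ _ (by omega)
        have := hFtop j hj'.le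
        linarith
      calc _ ≤ ∑ _j ∈ Finset.range N, F (m - N) (n + N) := Finset.sum_le_sum this
        _ = (N : ℝ) * F (m - N) (n + N) := by simp [Finset.sum_const]
    have b2 : ∑ i ∈ Finset.range N, (F (m - i) (n + N) - F (m - i) n)
        ≤ (N : ℝ) * F (m - N) (n + N) := by
      have : ∀ i ∈ Finset.range N, F (m - i) (n + N) - F (m - i) n ≤ F (m - N) (n + N) := by
        intro i hi
        have hi' := Finset.mem_range.mp hi
        have h0 : 0 ≤ F (m - i) n := hF_nonneg _ _ (by omega)
        have := hFright i hi'.le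
        linarith
      calc _ ≤ ∑ _i ∈ Finset.range N, F (m - N) (n + N) := Finset.sum_le_sum this
        _ = (N : ℝ) * F (m - N) (n + N) := by simp [Finset.sum_const]
    have := add_le_add b1 b2
    nlinarith [this]
  -- now the limit argument
  have hmain : ∀ ε : ℝ, 0 < ε → C * G m n ≤ ε := by
    intro ε hε
    set δ := ε / (6 * K + 1) with hδdef
    have hδ : 0 < δ := by positivity
    obtain ⟨R, hR⟩ := hF_lim δ hδ
    obtain ⟨N, hN1, hN2, hN3⟩ : ∃ N : ℕ, 1 ≤ N ∧ R ≤ (N : ℤ) ∧ n - m ≤ (N : ℤ) := by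
      refine ⟨(R.toNat + (n - m).toNat + 1), by omega, by omega, by omega⟩
    have hle : m - (N : ℤ) ≤ n + (N : ℤ) := by omega
    have hRle : R ≤ (n + (N : ℤ)) - (m - N) := by omega
    have hF := hR (m - N) (n + N) hle hRle
    have hden : (0 : ℝ) < ((n + (N:ℤ) : ℤ) : ℝ) - ((m - (N:ℤ) : ℤ) : ℝ) := by
      push_cast
      have : (1 : ℝ) ≤ (N : ℝ) := by exact_mod_cast hN1
      have : (m : ℝ) ≤ (n : ℝ) := by exact_mod_cast hmn
      linarith
    rw [div_lt_iff₀ hden] at hF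
    have hFb : F (m - N) (n + N) < δ * (3 * N) := by
      have hc : ((n + (N:ℤ) : ℤ) : ℝ) - ((m - (N:ℤ) : ℤ) : ℝ) ≤ 3 * (N : ℝ) := by
        push_cast
        have : (n : ℝ) - m ≤ (N : ℝ) := by exact_mod_cast hN3
        linarith
      calc F (m - N) (n + N) < δ * (((n + (N:ℤ) : ℤ) : ℝ) - ((m - (N:ℤ) : ℤ) : ℝ)) := hF
        _ ≤ δ * (3 * N) := by nlinarith
    have hk := key N
    have hNpos : (0 : ℝ) < (N : ℝ) := by exact_mod_cast hN1
    -- N² (C G) ≤ 2 K N F ≤ 2 K N δ 3 N = 6 K δ N²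
    have h6 : (N : ℝ) ^ 2 * (C * G m n) ≤ 6 * K * δ * (N : ℝ) ^ 2 := by
      calc (N : ℝ) ^ 2 * (C * G m n) ≤ K * (2 * N * F (m - N) (n + N)) := hk
        _ ≤ K * (2 * N * (δ * (3 * N))) := by
          have h2N : (0:ℝ) ≤ 2 * (N:ℝ) := by positivity
          nlinarith [mul_le_mul_of_nonneg_left (mul_le_mul_of_nonneg_left hFb.le h2N) hK]
        _ = 6 * K * δ * (N : ℝ) ^ 2 := by ring
    have hCG' : C * G m n ≤ 6 * K * δ := by
      have hN2pos : (0 : ℝ) < (N : ℝ) ^ 2 := by positivity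
      nlinarith
    have : 6 * K * δ ≤ ε := by
      have h1 : (0:ℝ) < 6 * K + 1 := by positivity
      rw [hδdef, show 6 * K * (ε / (6 * K + 1)) = (6 * K * ε) / (6 * K + 1) from by ring,
        div_le_iff₀ h1]
      nlinarith
    linarith
  have h0 : C * G m n ≤ 0 := by
    by_contra hpos
    push_neg at hpos
    have := hmain (C * G m n / 2) (by linarith)
    linarith
  have := hG_nonneg m n hmn
  nlinarith
end

section
/- Let η ≤ γ ≤ ξ in {0,1}^ℤ and suppose g^l_{m,n}(η,γ,ξ) = 0 for all integers m ≤ n and all l ≥ 1. Then the triple (η,γ,ξ) lies in A_1 ∪ A_2 ∪ A_3 ∪ A_4, where A_1 = {γ = η}, A_2 = {γ = ξ}, A_3 = {∃x : γ(y)=η(y) for y ≤ x and γ(y)=ξ(y) for y > x, and γ ≠ η, γ ≠ ξ}, A_4 = {∃x : γ(y)=ξ(y) for y ≤ x and γ(y)=η(y) for y > x, and γ ≠ η, γ ≠ ξ}. Conversely, on A_1 ∪ A_2 ∪ A_3 ∪ A_4 all g^l_{m,n} vanish. -/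
open Classical Finset

/-!
An interior block of `γ` along the sites of `[m, n]` exists exactly when `γ`, restricted to the
set `D = {η = 0, ξ = 1}`, has a dent `a < b < c` in `[m, n]` with `γ a ≠ γ b ≠ γ c`: the
maximal constant block through `b` is then interior, and conversely the two neighbours of an
interior block form a dent with it. So all `g^l_{m,n}` vanish iff `γ` is monotone or antitone
on `D`. Off `D` the sandwich `η ≤ γ ≤ ξ` forces `γ = η = ξ`, and on `D` a monotone (antitone)
Boolean function taking both values switches from `η` to `ξ` (from `ξ` to `η`) at one cut.
-/

variable {ι α β : Type*}

def HasDent [Preorder α] (f : α → β) (s : Set α) : Prop :=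
  ∃ a ∈ s, ∃ b ∈ s, ∃ c ∈ s, a < b ∧ b < c ∧ f a ≠ f b ∧ f c ≠ f b

theorem hasDent_image_iff [LinearOrder ι] [Preorder α] {e : ι → α} {s : Set ι}
    (he : StrictMonoOn e s) {f : ι → β} {g : α → β} (hfg : ∀ i ∈ s, f i = g (e i)) :
    HasDent f s ↔ HasDent g (e '' s) := by
  constructor
  · rintro ⟨a, ha, b, hb, c, hc, hab, hbc, h₁, h₂⟩
    refine ⟨e a, ⟨a, ha, rfl⟩, e b, ⟨b, hb, rfl⟩, e c, ⟨c, hc, rfl⟩, he ha hb hab, he hb hc hbc,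
      ?_, ?_⟩
    · rwa [← hfg a ha, ← hfg b hb]
    · rwa [← hfg c hc, ← hfg b hb]
  · rintro ⟨_, ⟨a, ha, rfl⟩, _, ⟨b, hb, rfl⟩, _, ⟨c, hc, rfl⟩, hab, hbc, h₁, h₂⟩
    refine ⟨a, ha, b, hb, c, hc, (he.lt_iff_lt ha hb).1 hab, (he.lt_iff_lt hb hc).1 hbc, ?_, ?_⟩
    · rwa [hfg a ha, hfg b hb]
    · rwa [hfg c hc, hfg b hb]

theorem hasDent_iff_not_monotoneOn_and_not_antitoneOn [LinearOrder α] {f : α → Bool}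
    {s : Set α} : HasDent f s ↔ ¬MonotoneOn f s ∧ ¬AntitoneOn f s := by
  have dent : ∀ x y z : Bool, x ≠ y ∧ z ≠ y ↔ x < y ∧ z < y ∨ y < x ∧ y < z := by decide
  simp only [Set.not_monotoneOn_not_antitoneOn_iff_exists_lt_lt, HasDent, dent]

theorem hasDent_of_interiorBlocks_ne_zero {s : List Bool} {l : ℕ} (hl : 1 ≤ l)
    (h : interiorBlocks s l ≠ 0) : HasDent (s.getD · false) (Set.Iio s.length) := by
  obtain ⟨i, -, hi, hlen, hprev, -, hnext⟩ :=
    Finset.filter_nonempty_iff.1 (Finset.card_ne_zero.1 h)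
  exact ⟨i - 1, Set.mem_Iio.2 (by omega), i, Set.mem_Iio.2 (by omega), i + l,
    Set.mem_Iio.2 (by omega), by omega, by omega, hprev, hnext⟩

theorem exists_interiorBlocks_ne_zero_of_hasDent {s : List Bool}
    (h : HasDent (s.getD · false) (Set.Iio s.length)) :
    ∃ l, 1 ≤ l ∧ interiorBlocks s l ≠ 0 := by
  obtain ⟨a, -, b, -, c, hc : c < s.length, hab, hbc, hba, hcb⟩ := h
  set f := (s.getD · false)
  -- the maximal constant block through `b` is `[p, q)`
  let P p := f (p - 1) ≠ f b
  have hq : ∃ q, b < q ∧ f q ≠ f b := ⟨c, hbc, hcb⟩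
  set q := Nat.find hq
  set p := Nat.findGreatest P b
  have hPa : P (a + 1) := by simpa [P] using hba
  have hap : a < p := Nat.le_findGreatest hab hPa
  have hpb : p ≤ b := Nat.findGreatest_le b
  have hbq : b < q := (Nat.find_spec hq).1
  have hqc : q ≤ c := Nat.find_min' hq ⟨hbc, hcb⟩
  have hfp : f (p - 1) ≠ f b := Nat.findGreatest_spec hab hPa
  have hfq : f q ≠ f b := (Nat.find_spec hq).2
  have hblock : ∀ j, p ≤ j → j < q → f j = f b := by
    intro j hpj hjq
    rcases lt_trichotomy j b with hjb | rfl | hbj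
    · simpa [P] using Nat.findGreatest_is_greatest (P := P) (k := j + 1) (by omega) hjb
    · rfl
    · exact not_not.1 fun hj => Nat.find_min hq hjq ⟨hbj, hj⟩
  refine ⟨q - p, by omega, Finset.card_ne_zero_of_mem (a := p) (Finset.mem_filter.2 ?_)⟩
  refine ⟨Finset.mem_range.2 (by omega), by omega, by omega, ?_, fun j hpj hjq => ?_, ?_⟩
  · show f (p - 1) ≠ f p
    rwa [hblock p le_rfl (by omega)]
  · show f j = f p
    rw [hblock j hpj (by omega), hblock p le_rfl (by omega)]
  · show f (p + (q - p)) ≠ f p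
    rwa [Nat.add_sub_cancel' (by omega), hblock p le_rfl (by omega)]

theorem exists_interiorBlocks_ne_zero_iff (s : List Bool) :
    (∃ l, 1 ≤ l ∧ interiorBlocks s l ≠ 0) ↔ HasDent (s.getD · false) (Set.Iio s.length) :=
  ⟨fun ⟨_, hl, h⟩ => hasDent_of_interiorBlocks_ne_zero hl h,
    exists_interiorBlocks_ne_zero_of_hasDent⟩

theorem List.SortedLT.hasDent_map_getD_iff [LinearOrder α] [Inhabited α] {L : List α}
    (hL : L.SortedLT) (g : α → β) (d : β) :
    HasDent ((L.map g).getD · d) (Set.Iio (L.map g).length) ↔ HasDent g {x | x ∈ L} := by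
  have hmono : StrictMonoOn (L.getD · default) (Set.Iio L.length) := fun i hi j hj hij => by
    simp only [List.getD_eq_getElem _ _ hi, List.getD_eq_getElem _ _ hj]
    exact hL.strictMono_get hij
  have himage : (L.getD · default) '' Set.Iio L.length = {x | x ∈ L} := by
    ext x
    simp only [Set.mem_image, Set.mem_Iio, List.mem_iff_getElem]
    exact exists_congr fun i => ⟨fun ⟨hi, hx⟩ => ⟨hi, by rwa [List.getD_eq_getElem _ _ hi] at hx⟩,
      fun ⟨hi, hx⟩ => ⟨hi, by rwa [List.getD_eq_getElem _ _ hi]⟩⟩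
  rw [List.length_map, hasDent_image_iff (g := g) hmono fun i (hi : i < L.length) => by simp [hi],
    himage]

theorem hasDent_iff_exists_Icc_inter [Preorder α] {f : α → β} {s : Set α} :
    HasDent f s ↔ ∃ m n, m ≤ n ∧ HasDent f (Set.Icc m n ∩ s) := by
  constructor
  · rintro ⟨a, ha, b, hb, c, hc, hab, hbc, hfab, hfcb⟩
    have hac := hab.le.trans hbc.le
    exact ⟨a, c, hac, a, ⟨⟨le_rfl, hac⟩, ha⟩, b, ⟨⟨hab.le, hbc.le⟩, hb⟩, c, ⟨⟨hac, le_rfl⟩, hc⟩,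
      hab, hbc, hfab, hfcb⟩
  · rintro ⟨m, n, -, a, ha, b, hb, c, hc, h⟩
    exact ⟨a, ha.2, b, hb.2, c, hc.2, h⟩

def discrepancySet (η ξ : ℤ → Bool) : Set ℤ := {x | η x = false ∧ ξ x = true}

theorem setOf_mem_sort_sites (η ξ : ℤ → Bool) (m n : ℤ) :
    {x | x ∈ (sites η ξ m n).sort (· ≤ ·)} = Set.Icc m n ∩ discrepancySet η ξ := by
  ext x
  simp [sites, discrepancySet]

theorem forall_gCount_eq_zero_iff (η γ ξ : ℤ → Bool) :
    (∀ m n : ℤ, m ≤ n → ∀ l : ℕ, 1 ≤ l → gCount η γ ξ m n l = 0) ↔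
      ¬HasDent γ (discrepancySet η ξ) := by
  rw [hasDent_iff_exists_Icc_inter]
  simp only [not_exists, not_and]
  refine forall₂_congr fun m n => imp_congr_right fun _ => ?_
  rw [← setOf_mem_sort_sites, ← (sortedLT_sort _).hasDent_map_getD_iff γ false,
    ← exists_interiorBlocks_ne_zero_iff]
  simp only [gCount, gammaSeq, not_exists, not_and, not_not]

def SwitchesAt (γ η ξ : ℤ → Bool) (x : ℤ) : Prop :=
  (∀ y, y ≤ x → γ y = η y) ∧ ∀ y, x < y → γ y = ξ y

theorem SwitchesAt.monotoneOn {η γ ξ : ℤ → Bool} {x : ℤ} (h : SwitchesAt γ η ξ x) :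
    MonotoneOn γ (discrepancySet η ξ) := by
  intro a ha b hb hab
  by_cases hbx : b ≤ x
  · rw [h.1 a (hab.trans hbx), ha.1]
    exact Bool.false_le _
  · rw [h.2 b (not_le.1 hbx), hb.2]
    exact Bool.le_true _

theorem SwitchesAt.antitoneOn {η γ ξ : ℤ → Bool} {x : ℤ} (h : SwitchesAt γ ξ η x) :
    AntitoneOn γ (discrepancySet η ξ) := by
  intro a ha b hb hab
  by_cases hbx : b ≤ x
  · rw [h.1 a (hab.trans hbx), ha.2]
    exact Bool.le_true _
  · rw [h.2 b (not_le.1 hbx), hb.1]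
    exact Bool.false_le _

theorem exists_cut_of_monotoneOn {f : ℤ → Bool} {s : Set ℤ} (hf : MonotoneOn f s)
    {u v : ℤ} (hu : u ∈ s) (hfu : f u = true) (hv : v ∈ s) (hfv : f v = false) :
    ∃ x, ∀ y ∈ s, f y = true ↔ x < y := by
  have hbdd : ∀ z, z ∈ s ∧ f z = false → z ≤ u := by
    rintro z ⟨hz, hfz⟩
    by_contra! huz
    exact absurd (hfu ▸ hfz ▸ hf hu hz huz.le) (by decide)
  obtain ⟨x, ⟨hx, hfx⟩, hmax⟩ := Int.exists_greatest_of_bdd ⟨u, hbdd⟩ ⟨v, hv, hfv⟩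
  refine ⟨x, fun y hy => ⟨fun hfy => ?_, fun hxy => ?_⟩⟩
  · by_contra! hyx
    exact absurd (hfy ▸ hfx ▸ hf hy hx hyx) (by decide)
  · by_contra hfy
    exact absurd (hmax y ⟨hy, by simpa using hfy⟩) (not_le.2 hxy)

section Sandwich

variable {η γ ξ : ℤ → Bool} (hηγ : ∀ x, η x ≤ γ x) (hγξ : ∀ x, γ x ≤ ξ x)
include hηγ hγξ

theorem eq_and_eq_of_not_mem_discrepancySet {y : ℤ} (hy : y ∉ discrepancySet η ξ) :
    γ y = η y ∧ γ y = ξ y :=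
  (by decide : ∀ a b c : Bool, a ≤ b → b ≤ c → ¬(a = false ∧ c = true) → b = a ∧ b = c)
    _ _ _ (hηγ y) (hγξ y) hy

theorem exists_mem_discrepancySet_of_ne_left (h : γ ≠ η) :
    ∃ u ∈ discrepancySet η ξ, γ u = true := by
  obtain ⟨u, hu⟩ := Function.ne_iff.1 h
  have hD : u ∈ discrepancySet η ξ := by
    by_contra hD
    exact hu (eq_and_eq_of_not_mem_discrepancySet hηγ hγξ hD).1
  exact ⟨u, hD, by simpa [hD.1] using hu⟩

theorem exists_mem_discrepancySet_of_ne_right (h : γ ≠ ξ) :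
    ∃ v ∈ discrepancySet η ξ, γ v = false := by
  obtain ⟨v, hv⟩ := Function.ne_iff.1 h
  have hD : v ∈ discrepancySet η ξ := by
    by_contra hD
    exact hv (eq_and_eq_of_not_mem_discrepancySet hηγ hγξ hD).2
  exact ⟨v, hD, by simpa [hD.2] using hv⟩

theorem switchesAt_of_forall_eq_true_iff {x : ℤ}
    (h : ∀ y ∈ discrepancySet η ξ, γ y = true ↔ x < y) : SwitchesAt γ η ξ x := by
  refine ⟨fun y hy => ?_, fun y hy => ?_⟩ <;> by_cases hyD : y ∈ discrepancySet η ξ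
  · simpa [hyD.1, not_lt.2 hy] using h y hyD
  · exact (eq_and_eq_of_not_mem_discrepancySet hηγ hγξ hyD).1
  · rw [hyD.2, (h y hyD).2 hy]
  · exact (eq_and_eq_of_not_mem_discrepancySet hηγ hγξ hyD).2

theorem switchesAt_of_forall_eq_false_iff {x : ℤ}
    (h : ∀ y ∈ discrepancySet η ξ, γ y = false ↔ x < y) : SwitchesAt γ ξ η x := by
  refine ⟨fun y hy => ?_, fun y hy => ?_⟩ <;> by_cases hyD : y ∈ discrepancySet η ξ
  · simpa [hyD.2, not_lt.2 hy] using h y hyD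
  · exact (eq_and_eq_of_not_mem_discrepancySet hηγ hγξ hyD).2
  · rw [hyD.1, (h y hyD).2 hy]
  · exact (eq_and_eq_of_not_mem_discrepancySet hηγ hγξ hyD).1

theorem monotoneOn_or_antitoneOn_iff :
    MonotoneOn γ (discrepancySet η ξ) ∨ AntitoneOn γ (discrepancySet η ξ) ↔
      γ = η ∨ γ = ξ ∨ ((∃ x, SwitchesAt γ η ξ x) ∧ γ ≠ η ∧ γ ≠ ξ) ∨
        ((∃ x, SwitchesAt γ ξ η x) ∧ γ ≠ η ∧ γ ≠ ξ) := by
  constructor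
  · intro hmono
    by_cases hη : γ = η
    · exact .inl hη
    by_cases hξ : γ = ξ
    · exact .inr (.inl hξ)
    obtain ⟨u, hu, hγu⟩ := exists_mem_discrepancySet_of_ne_left hηγ hγξ hη
    obtain ⟨v, hv, hγv⟩ := exists_mem_discrepancySet_of_ne_right hηγ hγξ hξ
    rcases hmono with hmono | hanti
    · obtain ⟨x, hx⟩ := exists_cut_of_monotoneOn hmono hu hγu hv hγv
      exact .inr (.inr (.inl ⟨⟨x, switchesAt_of_forall_eq_true_iff hηγ hγξ hx⟩, hη, hξ⟩))
    · have hnot : MonotoneOn (fun y => !γ y) (discrepancySet η ξ) :=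
        (by decide : Antitone (fun b : Bool => !b)).comp_antitoneOn hanti
      obtain ⟨x, hx⟩ := exists_cut_of_monotoneOn hnot hv (by simpa) hu (by simpa)
      refine .inr (.inr (.inr ⟨⟨x, switchesAt_of_forall_eq_false_iff hηγ hγξ ?_⟩, hη, hξ⟩))
      simpa using hx
  · rintro (h | h | ⟨⟨x, hx⟩, -⟩ | ⟨⟨x, hx⟩, -⟩)
    · exact .inl fun a ha b hb _ => by simp [h, ha.1]
    · exact .inl fun a ha b hb _ => by simp [h, hb.2]
    · exact .inl hx.monotoneOn
    · exact .inr hx.antitoneOn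

end Sandwich

/-- All `g^l_{m,n}` vanish iff `(η,γ,ξ)` lies in `A₁ ∪ A₂ ∪ A₃ ∪ A₄`: i.e. iff
`γ = η`, or `γ = ξ`, or `γ` agrees with `η` up to some point and with `ξ` afterwards
(and differs from both), or vice versa. -/
theorem g_vanish_iff (η γ ξ : ℤ → Bool)
    (hηγ : ∀ x, η x ≤ γ x) (hγξ : ∀ x, γ x ≤ ξ x) :
    (∀ m n : ℤ, m ≤ n → ∀ l : ℕ, 1 ≤ l → gCount η γ ξ m n l = 0) ↔
      (γ = η ∨ γ = ξ ∨
        ((∃ x : ℤ, (∀ y : ℤ, y ≤ x → γ y = η y) ∧ (∀ y : ℤ, x < y → γ y = ξ y)) ∧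
          γ ≠ η ∧ γ ≠ ξ) ∨
        ((∃ x : ℤ, (∀ y : ℤ, y ≤ x → γ y = ξ y) ∧ (∀ y : ℤ, x < y → γ y = η y)) ∧
          γ ≠ η ∧ γ ≠ ξ)) := by
  rw [forall_gCount_eq_zero_iff, hasDent_iff_not_monotoneOn_and_not_antitoneOn, not_and_or,
    not_not, not_not]
  exact monotoneOn_or_antitoneOn_iff hηγ hγξ
end
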